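/- Let 0 ≤ s ≤ n-1. The number of prime parking functions π of length n with π_1 < π_2 < ... < π_s equals C(n-1, s) · (n-1)^(n-s-1). -/

import Mathlib

/-- A parking function of length `n`. -/
def IsParkingFunction (n : ℕ) (π : Fin n → ℕ) : Prop :=
  (∀ i, 1 ≤ π i) ∧ ∃ σ : Equiv.Perm (Fin n),
    Monotone (π ∘ σ) ∧ ∀ i : Fin n, π (σ i) ≤ (i : ℕ) + 1

/-- A prime parking function of length `n`. -/
def IsPrimeParkingFunction (n : ℕ) (π : Fin n → ℕ) : Prop :=
  IsParkingFunction n π ∧ ∀ j : ℕ, 1 ≤ j → j ≤ n - 1 →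
    j + 1 ≤ (Finset.univ.filter (fun i : Fin n => π i ≤ j)).card

open Finset

/-!
Write `n = m + 1`. Reducing values modulo `m` identifies prime parking functions of length `m + 1`
with the maps `a : Fin (m + 1) → ZMod m` satisfying a counting condition, and by the cycle lemma
exactly one of the `m` translates `c + a` of any map `a` satisfies it. The maps whose first `s`
values are distinct are stable under translation and under permuting the first `s` coordinates;
there are `m (m - 1) ⋯ (m - s + 1) · m ^ (m + 1 - s)` of them, and each orbit of the permutations
contains exactly one map whose first `s` values increase as representatives in `{1, …, m}`.
Dividing by `m · s!` leaves `C(m, s) · m ^ (m - s)`.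
-/

@[to_additive]
theorem Nat.card_eq_of_existsUnique_smul {G X : Type*} [Group G] [MulAction G X]
    {Q P : X → Prop} (hQ : ∀ (g : G) x, Q x → Q (g • x))
    (hP : ∀ x, Q x → ∃! g : G, P (g • x)) :
    Nat.card {x // Q x} = Nat.card {x // Q x ∧ P x} * Nat.card G := by
  choose g hg hg_unique using hP
  rw [← Nat.card_prod]
  refine Nat.card_congr
    { toFun := fun x => (⟨g x.1 x.2 • x.1, hQ _ _ x.2, hg _ _⟩, (g x.1 x.2)⁻¹)
      invFun := fun p => ⟨p.2 • p.1.1, hQ _ _ p.1.2.1⟩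
      left_inv := fun x => by simp [smul_smul]
      right_inv := fun ⟨⟨y, hQy, hPy⟩, h⟩ => ?_ }
  have : h⁻¹ = g (h • y) (hQ _ _ hQy) :=
    hg_unique _ _ _ (show P (h⁻¹ • h • y) by rwa [inv_smul_smul])
  simp [← this]

theorem Tuple.existsUnique_strictMono_comp {n : ℕ} {α : Type*} [LinearOrder α] {f : Fin n → α}
    (hf : Function.Injective f) : ∃! σ : Equiv.Perm (Fin n), StrictMono (f ∘ σ) :=
  ⟨Tuple.sort f,
    (Tuple.monotone_sort f).strictMono_of_injective (hf.comp (Tuple.sort f).injective),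
    fun _ hσ => Equiv.ext fun i =>
      hf (congrFun (Tuple.comp_sort_eq_comp_iff_monotone.2 hσ.monotone) i)⟩

theorem ZMod.sum_range_add_natCast {M : Type*} [AddCommMonoid M] {m : ℕ} [NeZero m]
    (f : ZMod m → M) (c : ZMod m) : ∑ i ∈ range m, f (c + i) = ∑ r, f r :=
  sum_nbij' (fun i => c + i) (fun r => (r - c).val) (fun _ _ => mem_univ _)
    (fun r _ => mem_range.2 (ZMod.val_lt _))
    (fun i hi => by simp [ZMod.val_cast_of_lt (mem_range.1 hi)])
    (fun r _ => by simp) (fun _ _ => rfl)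

-- the cycle lemma of Dvoretzky and Motzkin
theorem ZMod.existsUnique_forall_sum_range_pos {m : ℕ} [NeZero m] (f : ZMod m → ℤ)
    (hf : ∑ r, f r = 1) :
    ∃! c : ZMod m, ∀ j, 0 < j → j ≤ m → 0 < ∑ i ∈ range j, f (c + i) := by
  set S : ℕ → ℤ := fun t => ∑ i ∈ range t, f i
  have hS (t j : ℕ) : ∑ i ∈ range j, f (t + i) = S (t + j) - S t := by
    simp only [S, sum_range_add, Nat.cast_add]; ring
  have hS_period (t : ℕ) : S (t + m) = S t + 1 := by
    linarith [hS t m, ZMod.sum_range_add_natCast f t]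
  -- a rotation starting at `t` has positive partial sums iff `t` is the last minimiser of `S`
  let key : ℕ → ℤ ×ₗ ℕᵒᵈ := fun u => toLex (S u, OrderDual.toDual u)
  have hgood {t : ℕ} (ht : t < m) :
      (∀ j, 0 < j → j ≤ m → S t < S (t + j)) ↔ ∀ u < m, key t ≤ key u := by
    simp only [key, Prod.Lex.toLex_le_toLex, OrderDual.toDual_le_toDual]
    constructor
    · intro h u hu
      rcases lt_or_ge t u with htu | hut
      · have := h (u - t) (by omega) (by omega)
        rw [Nat.add_sub_cancel' htu.le] at this
        exact Or.inl this
      · have := h (u + m - t) (by omega) (by omega)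
        rw [show t + (u + m - t) = u + m by omega, hS_period] at this
        omega
    · intro h j hj hjm
      rcases lt_or_ge (t + j) m with h' | h'
      · have := h _ h'
        omega
      · have := h (t + j - m) (by omega)
        rw [show t + j = t + j - m + m by omega, hS_period]
        omega
  obtain ⟨t, ht, hmin⟩ := exists_min_image (range m) key ⟨0, mem_range.2 (NeZero.pos m)⟩
  have ht' := mem_range.1 ht
  refine ⟨t, fun j hj hjm => ?_, fun c hc => ?_⟩
  · rw [hS]
    linarith [(hgood ht').2 (fun u hu => hmin u (mem_range.2 hu)) j hj hjm]
  · rw [← ZMod.natCast_zmod_val c] at hc ⊢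
    have hc' := (hgood (ZMod.val_lt c)).1 fun j hj hjm => by
      linarith [hS c.val j ▸ hc j hj hjm]
    have hkey := le_antisymm (hc' t ht') (hmin c.val (mem_range.2 (ZMod.val_lt c)))
    rw [show c.val = t from congrArg (fun k => OrderDual.ofDual (ofLex k).2) hkey]

theorem Finset.card_filter_comp_equiv {ι κ : Type*} [Fintype ι] [Fintype κ] (e : κ ≃ ι)
    (p : ι → Prop) [DecidablePred p] : #{k | p (e k)} = #{i | p i} :=
  card_equiv e fun _ => by simp

theorem IsParkingFunction.le {n : ℕ} {π : Fin n → ℕ} (h : IsParkingFunction n π) (i : Fin n) :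
    π i ≤ n := by
  obtain ⟨-, σ, -, hσ⟩ := h
  simpa using (hσ (σ.symm i)).trans (Nat.succ_le_of_lt (σ.symm i).2)

theorem isParkingFunction_of_le_card_filter {n : ℕ} {π : Fin n → ℕ} (hpos : ∀ i, 1 ≤ π i)
    (hcard : ∀ j < n, j + 1 ≤ #{i | π i ≤ j + 1}) : IsParkingFunction n π := by
  refine ⟨hpos, Tuple.sort π, Tuple.monotone_sort π, fun i => ?_⟩
  by_contra! hi
  -- the values `≤ i + 1` of the sorted tuple all sit strictly before position `i`
  have hsub : ({k | π (Tuple.sort π k) ≤ i + 1} : Finset (Fin n)) ⊆ Iio i := fun k hk => by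
    simp only [mem_filter, mem_univ, true_and, mem_Iio] at hk ⊢
    by_contra! hik
    exact absurd (Tuple.monotone_sort π hik) (by simp only [Function.comp_apply]; omega)
  have := card_le_card hsub
  rw [card_filter_comp_equiv (Tuple.sort π) (fun k => π k ≤ i + 1), Fin.card_Iio] at this
  have := hcard i i.2
  omega

theorem isPrimeParkingFunction_succ_iff {m : ℕ} (hm : 0 < m) (π : Fin (m + 1) → ℕ) :
    IsPrimeParkingFunction (m + 1) π ↔
      (∀ i, 1 ≤ π i) ∧ ∀ j, 1 ≤ j → j ≤ m → j + 1 ≤ #{i | π i ≤ j} := by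
  refine ⟨fun h => ⟨h.1.1, by simpa using h.2⟩,
    fun ⟨hpos, hcard⟩ => ⟨?_, by simpa using hcard⟩⟩
  refine isParkingFunction_of_le_card_filter hpos fun j hj => ?_
  rcases lt_or_ge j m with hjm | hjm
  · linarith [hcard (j + 1) (by omega) hjm]
  · obtain rfl : j = m := by omega
    have : #{i | π i ≤ j} ≤ #{i | π i ≤ j + 1} :=
      card_le_card fun i => by simp only [mem_filter, mem_univ, true_and]; omega
    have := hcard j hm le_rfl
    omega

theorem isPrimeParkingFunction_iff_of_le_one {n : ℕ} (hn : n ≤ 1) (π : Fin n → ℕ) :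
    IsPrimeParkingFunction n π ↔ π = fun _ => 1 := by
  constructor
  · rintro ⟨hπ, -⟩
    funext i
    linarith [hπ.1 i, hπ.le i]
  · rintro rfl
    exact ⟨⟨fun _ => le_rfl, 1, monotone_const, fun _ => by simp⟩, fun j hj hjn => by omega⟩

theorem Nat.card_injective_comp_inl {α β γ : Type*} [Fintype α] [Fintype β] [Fintype γ] :
    Nat.card {a : α ⊕ γ → β // Function.Injective (a ∘ Sum.inl)} =
      (Fintype.card β).descFactorial (Fintype.card α) * Fintype.card β ^ Fintype.card γ := by
  classical
  calc _ = Nat.card {p : (α → β) × (γ → β) // Function.Injective p.1} :=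
        Nat.card_congr ((Equiv.sumArrowEquivProdArrow α γ β).subtypeEquiv fun _ => Iff.rfl)
    _ = Nat.card (α ↪ β) * Nat.card (γ → β) := by
      rw [Nat.card_congr Equiv.prodSubtypeFstEquivSubtypeProd, Nat.card_prod,
        Nat.card_congr (Equiv.subtypeInjectiveEquivEmbedding _ _)]
    _ = _ := by
      rw [Nat.card_eq_fintype_card, Fintype.card_embedding_eq, Nat.card_eq_fintype_card,
        Fintype.card_fun]

def finSumFinSubEquiv {n s : ℕ} (hs : s ≤ n) : Fin s ⊕ Fin (n - s) ≃ Fin n :=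
  finSumFinEquiv.trans (finCongr (Nat.add_sub_cancel' hs))

@[simp]
theorem finSumFinSubEquiv_inl {n s : ℕ} (hs : s ≤ n) (k : Fin s) :
    finSumFinSubEquiv hs (Sum.inl k) = Fin.castLE hs k := by
  ext
  simp [finSumFinSubEquiv]

theorem forall_lt_imp_lt_iff_strictMono {n s : ℕ} (hs : s ≤ n) (π : Fin n → ℕ) :
    (∀ i j : Fin n, (i : ℕ) < j → (j : ℕ) < s → π i < π j) ↔
      StrictMono (π ∘ finSumFinSubEquiv hs ∘ Sum.inl) :=
  ⟨fun h i j hij => h _ _ hij (by simp),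
    fun h i j hij hjs => h (show (⟨i, hij.trans hjs⟩ : Fin s) < ⟨j, hjs⟩ from hij)⟩

namespace ParkingFunction

variable {m : ℕ} {ι : Type*} [Fintype ι]

-- the representative of `r` in `{1, …, m}`
def rep (m : ℕ) (r : ZMod m) : ℕ := (r - 1).val + 1

theorem one_le_rep (r : ZMod m) : 1 ≤ rep m r := Nat.le_add_left 1 _

@[simp]
theorem natCast_rep [NeZero m] (r : ZMod m) : (rep m r : ZMod m) = r := by simp [rep]

theorem rep_injective [NeZero m] : Function.Injective (rep m) :=
  Function.LeftInverse.injective natCast_rep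

theorem rep_natCast {x : ℕ} (h₁ : 1 ≤ x) (h₂ : x ≤ m) : rep m x = x := by
  obtain ⟨y, rfl⟩ := Nat.exists_eq_add_of_le' h₁
  simp [rep, ZMod.val_cast_of_lt (show y < m by omega)]

theorem card_filter_rep_le [NeZero m] (b : ι → ZMod m) {j : ℕ} (hj : j ≤ m) :
    #{i | rep m (b i) ≤ j} = ∑ v ∈ range j, #{i | b i = v + 1} := by
  rw [card_eq_sum_card_fiberwise (f := fun i => (b i - 1).val) (t := range j)
    fun i hi => by simp [rep] at hi ⊢; omega]
  refine sum_congr rfl fun v hv => congrArg card (ext fun i => ?_)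
  simp only [mem_filter, mem_univ, true_and, rep]
  constructor
  · rintro ⟨-, rfl⟩
    simp
  · rintro h
    have hvj := mem_range.1 hv
    simp [h, ZMod.val_cast_of_lt (hvj.trans_le hj), hvj]

def IsPrimeMod (a : ι → ZMod m) : Prop :=
  ∀ j, 1 ≤ j → j ≤ m → j + 1 ≤ #{i | rep m (a i) ≤ j}

theorem isPrimeMod_comp_equiv {κ : Type*} [Fintype κ] (e : κ ≃ ι) {a : ι → ZMod m} :
    IsPrimeMod (a ∘ e) ↔ IsPrimeMod a := by
  refine forall_congr' fun j => ?_
  rw [Function.comp_def, card_filter_comp_equiv e (fun i => rep m (a i) ≤ j)]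

theorem existsUnique_isPrimeMod_vadd [NeZero m] (a : ι → ZMod m) (ha : Fintype.card ι = m + 1) :
    ∃! c : ZMod m, IsPrimeMod (c +ᵥ a) := by
  set f : ZMod m → ℤ := fun r => #{i | a i = r + 1} - 1
  have hf : ∑ r, f r = 1 := by
    have : ∑ r, #{i | a i = r + 1} = Fintype.card ι := calc
      _ = ∑ r, #{i | a i = r} := Equiv.sum_comp (Equiv.addRight 1) fun r => #{i | a i = r}
      _ = Fintype.card ι := (card_eq_sum_card_fiberwise fun i _ => mem_univ (a i)).symm
    simp only [f, sum_sub_distrib, ← Nat.cast_sum, this, ha, sum_const, card_univ, ZMod.card]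
    simp
  have hcount (c : ZMod m) {j : ℕ} (hj : j ≤ m) :
      (#{i | rep m ((c +ᵥ a) i) ≤ j} : ℤ) = ∑ v ∈ range j, f (-c + v) + j := by
    have hshift (v : ℕ) : #{i | (c +ᵥ a) i = v + 1} = #{i | a i = -c + v + 1} :=
      congrArg card <| filter_congr fun i _ => by
        rw [Pi.vadd_apply, vadd_eq_add]
        constructor <;> intro h <;> linear_combination h
    simp only [card_filter_rep_le _ hj, hshift, f, sum_sub_distrib, Nat.cast_sum, sum_const,
      card_range]
    ring
  have hprime (c : ZMod m) :
      IsPrimeMod (c +ᵥ a) ↔ ∀ j, 0 < j → j ≤ m → 0 < ∑ i ∈ range j, f (-c + i) :=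
    forall_congr' fun j => by
      constructor <;> intro h hj hjm <;> have := hcount c hjm <;> have := h hj hjm <;> omega
  rw [existsUnique_congr hprime]
  simpa using (Equiv.neg _).existsUnique_congr_left.1 (ZMod.existsUnique_forall_sum_range_pos f hf)

theorem isPrimeParkingFunction_iff_exists [NeZero m] (π : Fin (m + 1) → ℕ) :
    IsPrimeParkingFunction (m + 1) π ↔
      ∃ a : Fin (m + 1) → ZMod m, IsPrimeMod a ∧ rep m ∘ a = π := by
  rw [isPrimeParkingFunction_succ_iff (NeZero.pos m)]
  constructor
  · rintro ⟨hpos, hcard⟩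
    have hle : ∀ i, π i ≤ m := by
      have := card_filter_le (univ : Finset (Fin (m + 1))) fun i => π i ≤ m
      have := hcard m NeZero.one_le le_rfl
      have hall : #{i | π i ≤ m} = #(univ : Finset (Fin (m + 1))) := by
        simp only [card_univ, Fintype.card_fin] at *; omega
      exact fun i => card_filter_eq_iff.1 hall i (mem_univ i)
    have hπ (i : Fin (m + 1)) : rep m (π i : ZMod m) = π i := rep_natCast (hpos i) (hle i)
    exact ⟨fun i => π i, fun j hj hjm => by simpa [hπ] using hcard j hj hjm, funext hπ⟩
  · rintro ⟨a, ha, rfl⟩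
    exact ⟨fun i => one_le_rep _, ha⟩

theorem card_isPrimeMod_strictMono [NeZero m] {s : ℕ} (hs : s ≤ m) :
    Nat.card {a : Fin s ⊕ Fin (m + 1 - s) → ZMod m //
      IsPrimeMod a ∧ StrictMono (rep m ∘ a ∘ Sum.inl)} = m.choose s * m ^ (m - s) := by
  let X := Fin s ⊕ Fin (m + 1 - s) → ZMod m
  have h_shift := Nat.card_eq_of_existsUnique_vadd (G := ZMod m) (X := X)
    (Q := fun a => Function.Injective (a ∘ Sum.inl)) (P := IsPrimeMod)
    (fun c _ ha => (add_right_injective c).comp ha)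
    (fun a _ => existsUnique_isPrimeMod_vadd a (by simp; omega))
  let : MulAction (Equiv.Perm (Fin s)) (Fin s ⊕ Fin (m + 1 - s)) :=
    .compHom _ ((Equiv.Perm.sumCongrHom (Fin s) (Fin (m + 1 - s))).comp (MonoidHom.inl _ _))
  let : MulAction (Equiv.Perm (Fin s)) X := arrowAction
  have hsmul (σ : Equiv.Perm (Fin s)) (a : X) : σ • a = a ∘ Equiv.sumCongr σ⁻¹ 1 := rfl
  have h_sort := Nat.card_eq_of_existsUnique_smul (G := Equiv.Perm (Fin s)) (X := X)
    (Q := fun a => Function.Injective (a ∘ Sum.inl) ∧ IsPrimeMod a)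
    (P := fun a => StrictMono (rep m ∘ a ∘ Sum.inl))
    (fun σ a ⟨hinj, ha⟩ => by
      rw [hsmul]
      exact ⟨hinj.comp (σ⁻¹).injective, (isPrimeMod_comp_equiv _).2 ha⟩)
    (fun a ⟨hinj, _⟩ => by
      have hinl (σ : Equiv.Perm (Fin s)) : (σ⁻¹ • a) ∘ Sum.inl = a ∘ Sum.inl ∘ σ := rfl
      refine ((Equiv.inv _).existsUnique_congr fun σ => ?_).1
        (Tuple.existsUnique_strictMono_comp (rep_injective.comp hinj))
      rw [Equiv.inv_apply, Function.comp_assoc, hinl]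
      rfl)
  have h_incr : Nat.card {a : X // (Function.Injective (a ∘ Sum.inl) ∧ IsPrimeMod a) ∧
      StrictMono (rep m ∘ a ∘ Sum.inl)} =
      Nat.card {a : X // IsPrimeMod a ∧ StrictMono (rep m ∘ a ∘ Sum.inl)} :=
    Nat.card_congr <| Equiv.subtypeEquivRight fun a =>
      ⟨fun ⟨⟨_, ha⟩, hmono⟩ => ⟨ha, hmono⟩,
        fun ⟨ha, hmono⟩ => ⟨⟨hmono.injective.of_comp, ha⟩, hmono⟩⟩
  rw [Nat.card_injective_comp_inl, h_sort, h_incr, Nat.card_zmod, Nat.card_perm,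
    Nat.descFactorial_eq_factorial_mul_choose] at h_shift
  simp only [ZMod.card, Nat.card_eq_fintype_card, Fintype.card_fin,
    show m + 1 - s = m - s + 1 by omega, pow_succ] at h_shift
  exact Nat.eq_of_mul_eq_mul_right (Nat.mul_pos s.factorial_pos (NeZero.pos m)) (by linarith)

theorem ncard_firstIncreasing_eq_card [NeZero m] {s : ℕ} (hs : s ≤ m) :
    Set.ncard {π : Fin (m + 1) → ℕ | IsPrimeParkingFunction (m + 1) π ∧
        ∀ i j : Fin (m + 1), (i : ℕ) < j → (j : ℕ) < s → π i < π j} =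
      Nat.card {a : Fin s ⊕ Fin (m + 1 - s) → ZMod m //
        IsPrimeMod a ∧ StrictMono (rep m ∘ a ∘ Sum.inl)} := by
  have hs' : s ≤ m + 1 := by omega
  have himage : {π : Fin (m + 1) → ℕ | IsPrimeParkingFunction (m + 1) π ∧
      ∀ i j : Fin (m + 1), (i : ℕ) < j → (j : ℕ) < s → π i < π j} =
      (fun a => rep m ∘ a ∘ (finSumFinSubEquiv hs').symm) ''
        {a | IsPrimeMod a ∧ StrictMono (rep m ∘ a ∘ Sum.inl)} := by
    ext π
    simp only [Set.mem_ofPred_eq, Set.mem_image, isPrimeParkingFunction_iff_exists,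
      forall_lt_imp_lt_iff_strictMono hs']
    constructor
    · rintro ⟨⟨a, ha, rfl⟩, hmono⟩
      exact ⟨a ∘ finSumFinSubEquiv hs', ⟨(isPrimeMod_comp_equiv _).2 ha, hmono⟩, by ext; simp⟩
    · rintro ⟨a, ⟨ha, hmono⟩, rfl⟩
      refine ⟨⟨a ∘ (finSumFinSubEquiv hs').symm, (isPrimeMod_comp_equiv _).2 ha, rfl⟩, ?_⟩
      simpa only [Function.comp_def, Equiv.symm_apply_apply] using hmono
  have hinj : Function.Injective
      fun a : Fin s ⊕ Fin (m + 1 - s) → ZMod m => rep m ∘ a ∘ (finSumFinSubEquiv hs').symm :=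
    fun a b h => funext fun x =>
      rep_injective (by simpa using congrFun h (finSumFinSubEquiv hs' x))
  rw [himage, Set.ncard_image_of_injective _ hinj, ← Nat.card_coe_set_eq]
  rfl

end ParkingFunction

/-- The number of prime parking functions of length `n` whose first `s` coordinates are
strictly increasing is `C(n-1, s) · (n-1)^(n-s-1)`. -/
theorem card_primeParkingFunctions_firstIncreasing (n s : ℕ) (hs : s ≤ n - 1) :
    Set.ncard {π : Fin n → ℕ | IsPrimeParkingFunction n π ∧
        ∀ i j : Fin n, (i : ℕ) < (j : ℕ) → (j : ℕ) < s → π i < π j} =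
      (n - 1).choose s * (n - 1) ^ (n - s - 1) := by
  rcases Nat.lt_or_ge n 2 with hn | hn
  · obtain rfl : s = 0 := by omega
    have : {π : Fin n → ℕ | IsPrimeParkingFunction n π ∧
        ∀ i j : Fin n, (i : ℕ) < (j : ℕ) → (j : ℕ) < 0 → π i < π j} = {fun _ => 1} := by
      ext π
      simp [isPrimeParkingFunction_iff_of_le_one (show n ≤ 1 by omega)]
    rw [this, Set.ncard_singleton]
    simp [show n - 1 = 0 by omega]
  · obtain ⟨m, rfl⟩ : ∃ m, n = m + 1 := ⟨n - 1, by omega⟩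
    have : NeZero m := ⟨by omega⟩
    rw [ParkingFunction.ncard_firstIncreasing_eq_card (by omega),
      ParkingFunction.card_isPrimeMod_strictMono (by omega),
      Nat.add_sub_cancel, show m + 1 - s - 1 = m - s by omega]
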